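/- arXiv:1512.01770 — 7 statements merged into one kernel-verified Lean document; each statement's English description precedes it below -/
import Mathlib

section
/- Let α, β, γ ∈ (0, π/2], δ ∈ (0, π/4], and set X = cos α · cos β · cos γ · sin(2δ). Then (1 + X)^2 - [sin²α·sin²β·sin²γ·sin²(2δ) + (cos²α + 2cos²β·cos²γ - cos²β - cos²γ)·sin²(2δ) - X²] ≥ (1+X)²·(1 - sin²(2δ)) ≥ 0. -/
/-!
With `cᵢ, sᵢ` the cosines and sines of `α, β, γ`, `t = sin 2δ` and `X = c₁ c₂ c₃ t`, the gap
between the two sides of the first inequality equals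
`t² (X (2 + X) + s₁² (c₂² s₃² + c₃² s₂²) + c₂² s₃² + c₃²)`, using only `sᵢ² + cᵢ² = 1`.
Every term is a square except `X (2 + X)`, and `X ≥ 0` because all cosines and `sin 2δ` are
nonnegative on the given ranges. The second inequality is `(1 + X)² cos² 2δ ≥ 0`.
-/

open Real

section GapIdentity

variable {c₁ c₂ c₃ s₁ s₂ s₃ t : ℝ}

theorem tangle_bell_gap_eq (h₁ : s₁ ^ 2 + c₁ ^ 2 = 1) (h₂ : s₂ ^ 2 + c₂ ^ 2 = 1)
    (h₃ : s₃ ^ 2 + c₃ ^ 2 = 1) :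
    (1 + c₁ * c₂ * c₃ * t) ^ 2 -
        (s₁ ^ 2 * s₂ ^ 2 * s₃ ^ 2 * t ^ 2 +
          (c₁ ^ 2 + 2 * c₂ ^ 2 * c₃ ^ 2 - c₂ ^ 2 - c₃ ^ 2) * t ^ 2 - (c₁ * c₂ * c₃ * t) ^ 2) -
      (1 + c₁ * c₂ * c₃ * t) ^ 2 * (1 - t ^ 2) =
    t ^ 2 * (c₁ * c₂ * c₃ * t * (2 + c₁ * c₂ * c₃ * t) +
      s₁ ^ 2 * (c₂ ^ 2 * s₃ ^ 2 + c₃ ^ 2 * s₂ ^ 2) + c₂ ^ 2 * s₃ ^ 2 + c₃ ^ 2) := by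
  linear_combination t ^ 2 * (c₂ ^ 2 * c₃ ^ 2 - 1) * h₁ -
    t ^ 2 * s₁ ^ 2 * (s₃ ^ 2 + c₃ ^ 2) * h₂ - t ^ 2 * (s₁ ^ 2 + c₂ ^ 2) * h₃

theorem tangle_bell_gap_nonneg (h₁ : s₁ ^ 2 + c₁ ^ 2 = 1) (h₂ : s₂ ^ 2 + c₂ ^ 2 = 1)
    (h₃ : s₃ ^ 2 + c₃ ^ 2 = 1) (hX : 0 ≤ c₁ * c₂ * c₃ * t) :
    (1 + c₁ * c₂ * c₃ * t) ^ 2 -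
        (s₁ ^ 2 * s₂ ^ 2 * s₃ ^ 2 * t ^ 2 +
          (c₁ ^ 2 + 2 * c₂ ^ 2 * c₃ ^ 2 - c₂ ^ 2 - c₃ ^ 2) * t ^ 2 - (c₁ * c₂ * c₃ * t) ^ 2) ≥
      (1 + c₁ * c₂ * c₃ * t) ^ 2 * (1 - t ^ 2) := by
  rw [ge_iff_le, ← sub_nonneg, tangle_bell_gap_eq h₁ h₂ h₃]
  have hX' : 0 ≤ c₁ * c₂ * c₃ * t * (2 + c₁ * c₂ * c₃ * t) := mul_nonneg hX (by linarith)
  positivity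

end GapIdentity

theorem cos_nonneg_of_mem_Ioc_zero_pi_div_two {x : ℝ} (hx : x ∈ Set.Ioc 0 (π / 2)) :
    0 ≤ cos x :=
  cos_nonneg_of_mem_Icc ⟨by linarith [pi_pos, hx.1], hx.2⟩

theorem ghzR_tangle_key_inequality (α β γ δ : ℝ)
    (hα : α ∈ Set.Ioc 0 (Real.pi / 2)) (hβ : β ∈ Set.Ioc 0 (Real.pi / 2))
    (hγ : γ ∈ Set.Ioc 0 (Real.pi / 2)) (hδ : δ ∈ Set.Ioc 0 (Real.pi / 4)) :
    (1 + Real.cos α * Real.cos β * Real.cos γ * Real.sin (2 * δ)) ^ 2 -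
        (Real.sin α ^ 2 * Real.sin β ^ 2 * Real.sin γ ^ 2 * Real.sin (2 * δ) ^ 2 +
          (Real.cos α ^ 2 + 2 * Real.cos β ^ 2 * Real.cos γ ^ 2 -
            Real.cos β ^ 2 - Real.cos γ ^ 2) * Real.sin (2 * δ) ^ 2 -
          (Real.cos α * Real.cos β * Real.cos γ * Real.sin (2 * δ)) ^ 2) ≥
      (1 + Real.cos α * Real.cos β * Real.cos γ * Real.sin (2 * δ)) ^ 2 *
        (1 - Real.sin (2 * δ) ^ 2) ∧
    (1 + Real.cos α * Real.cos β * Real.cos γ * Real.sin (2 * δ)) ^ 2 *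
        (1 - Real.sin (2 * δ) ^ 2) ≥ 0 := by
  have hsin : 0 ≤ sin (2 * δ) :=
    sin_nonneg_of_nonneg_of_le_pi (by linarith [hδ.1]) (by linarith [hδ.2, pi_pos])
  have hX : 0 ≤ cos α * cos β * cos γ * sin (2 * δ) :=
    mul_nonneg (mul_nonneg (mul_nonneg (cos_nonneg_of_mem_Ioc_zero_pi_div_two hα)
      (cos_nonneg_of_mem_Ioc_zero_pi_div_two hβ)) (cos_nonneg_of_mem_Ioc_zero_pi_div_two hγ)) hsin
  refine ⟨tangle_bell_gap_nonneg (sin_sq_add_cos_sq α) (sin_sq_add_cos_sq β)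
    (sin_sq_add_cos_sq γ) hX, ?_⟩
  rw [← cos_sq']
  positivity
end

section
/- Let α, β, γ ∈ (0, π/2], δ ∈ (0, π/4], and X = cos α cos β cos γ sin(2δ). Then the complementarity relation τ + B ≤ 1 holds, where τ = sin²α·sin²β·sin²γ·sin²(2δ)/(1+X)² and B = max{0, ((cos²α - cos²β - cos²γ + 2cos²β·cos²γ)·sin²(2δ) - X²)/(1+X)²}. -/
/-!
Write `a, b, c` for the cosines, `s = sin 2δ` and `X = a b c s ≥ 0`. Both `τ` and the non-trivial
branch of `B` have denominator `(1 + X)²`, so it suffices to bound the numerators by `(1 + X)² ≥ 1`.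
For `τ` this is clear, as its numerator is a product of numbers in `[0, 1]`. The numerator of
`τ + B` collapses to `s² (1 - (2 - a²)(b² + c²) + (3 - 2a²) b² c²)`, and the bracket is at most `1`
because `b² + c² ≥ 2 b² c²`.
-/

open Real

lemma two_mul_mul_le_add {x y : ℝ} (hx0 : 0 ≤ x) (hx1 : x ≤ 1) (hy0 : 0 ≤ y) (hy1 : y ≤ 1) :
    2 * x * y ≤ x + y := by
  nlinarith [mul_nonneg hx0 (sub_nonneg.2 hy1), mul_nonneg hy0 (sub_nonneg.2 hx1)]

lemma three_sub_two_mul_mul_le {p q r : ℝ} (hp : p ≤ 1) (hq0 : 0 ≤ q) (hq1 : q ≤ 1)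
    (hr0 : 0 ≤ r) (hr1 : r ≤ 1) :
    (3 - 2 * p) * (q * r) ≤ (2 - p) * (q + r) :=
  calc (3 - 2 * p) * (q * r) ≤ (2 - p) * (2 * q * r) := by nlinarith [mul_nonneg hq0 hr0]
    _ ≤ (2 - p) * (q + r) :=
      mul_le_mul_of_nonneg_left (two_mul_mul_le_add hq0 hq1 hr0 hr1) (by linarith)

lemma one_le_one_add_sq {x : ℝ} (hx : 0 ≤ x) : 1 ≤ (1 + x) ^ 2 := by nlinarith

section Numerators

variable {a b c s : ℝ} (ha : a ^ 2 ≤ 1) (hb : b ^ 2 ≤ 1) (hc : c ^ 2 ≤ 1) (hs : s ^ 2 ≤ 1)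
  (habcs : 0 ≤ a * b * c * s)
include ha hb hc hs habcs

lemma tangle_numerator_le :
    (1 - a ^ 2) * (1 - b ^ 2) * (1 - c ^ 2) * s ^ 2 ≤ (1 + a * b * c * s) ^ 2 := by
  have hunit : ∀ x : ℝ, x ^ 2 ≤ 1 → 0 ≤ 1 - x ^ 2 ∧ 1 - x ^ 2 ≤ 1 :=
    fun x hx => ⟨by linarith, by linarith [sq_nonneg x]⟩
  obtain ⟨ha0, ha1⟩ := hunit a ha
  obtain ⟨hb0, hb1⟩ := hunit b hb
  obtain ⟨hc0, hc1⟩ := hunit c hc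
  calc (1 - a ^ 2) * (1 - b ^ 2) * (1 - c ^ 2) * s ^ 2 ≤ 1 :=
        mul_le_one₀ (mul_le_one₀ (mul_le_one₀ ha1 hb0 hb1) hc0 hc1) (sq_nonneg s) hs
    _ ≤ (1 + a * b * c * s) ^ 2 := one_le_one_add_sq habcs

lemma tangle_add_bell_numerator_le :
    (1 - a ^ 2) * (1 - b ^ 2) * (1 - c ^ 2) * s ^ 2 +
        ((a ^ 2 - b ^ 2 - c ^ 2 + 2 * b ^ 2 * c ^ 2) * s ^ 2 - (a * b * c * s) ^ 2) ≤
      (1 + a * b * c * s) ^ 2 := by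
  have hbracket : (3 - 2 * a ^ 2) * (b ^ 2 * c ^ 2) ≤ (2 - a ^ 2) * (b ^ 2 + c ^ 2) :=
    three_sub_two_mul_mul_le ha (sq_nonneg b) hb (sq_nonneg c) hc
  calc _ = s ^ 2 * (1 - (2 - a ^ 2) * (b ^ 2 + c ^ 2) + (3 - 2 * a ^ 2) * (b ^ 2 * c ^ 2)) := by
        ring
    _ ≤ s ^ 2 * 1 := mul_le_mul_of_nonneg_left (by linarith) (sq_nonneg s)
    _ ≤ (1 + a * b * c * s) ^ 2 := by linarith [one_le_one_add_sq habcs]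

end Numerators

theorem ghzR_tangle_bell_complementarity (α β γ δ : ℝ)
    (hα : α ∈ Set.Ioc 0 (Real.pi / 2)) (hβ : β ∈ Set.Ioc 0 (Real.pi / 2))
    (hγ : γ ∈ Set.Ioc 0 (Real.pi / 2)) (hδ : δ ∈ Set.Ioc 0 (Real.pi / 4)) :
    Real.sin α ^ 2 * Real.sin β ^ 2 * Real.sin γ ^ 2 * Real.sin (2 * δ) ^ 2 /
        (1 + Real.cos α * Real.cos β * Real.cos γ * Real.sin (2 * δ)) ^ 2 +
      max 0
        (((Real.cos α ^ 2 - Real.cos β ^ 2 - Real.cos γ ^ 2 +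
            2 * Real.cos β ^ 2 * Real.cos γ ^ 2) * Real.sin (2 * δ) ^ 2 -
          (Real.cos α * Real.cos β * Real.cos γ * Real.sin (2 * δ)) ^ 2) /
          (1 + Real.cos α * Real.cos β * Real.cos γ * Real.sin (2 * δ)) ^ 2) ≤ 1 := by
  have hcos : ∀ θ ∈ Set.Ioc 0 (π / 2), 0 ≤ cos θ := fun θ hθ =>
    cos_nonneg_of_mem_Icc ⟨by linarith [pi_pos, hθ.1], hθ.2⟩
  have hsin : 0 ≤ sin (2 * δ) :=
    sin_nonneg_of_nonneg_of_le_pi (by linarith [hδ.1]) (by linarith [hδ.2, pi_pos])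
  have hX : 0 ≤ cos α * cos β * cos γ * sin (2 * δ) := by
    have := hcos α hα; have := hcos β hβ; have := hcos γ hγ; positivity
  have hD : 0 < (1 + cos α * cos β * cos γ * sin (2 * δ)) ^ 2 := by positivity
  rw [sin_sq α, sin_sq β, sin_sq γ, ← max_add_add_left, add_zero, ← add_div]
  exact max_le
    ((div_le_one hD).2 <| tangle_numerator_le (cos_sq_le_one α) (cos_sq_le_one β)
      (cos_sq_le_one γ) (sin_sq_le_one _) hX)
    ((div_le_one hD).2 <| tangle_add_bell_numerator_le (cos_sq_le_one α) (cos_sq_le_one β)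
      (cos_sq_le_one γ) (sin_sq_le_one _) hX)
end

section
/- Let α, β, γ ∈ (0, π/2], δ ∈ (0, π/4], X = cos α cos β cos γ sin(2δ), and define g_A = (1 + √(1 + sin²α(cos²β cos²γ - 1)sin²(2δ)/(1+X)²))/2 and g_B analogously with α and β exchanged. Then g_A ≥ g_B if and only if (cos²α - cos²β)·sin²γ ≥ 0. -/
/-!
Writing `a = cos α`, `b = cos β`, `c = cos γ`, `s = sin 2δ` and `D = (1 + a b c s)²`, the two
radicands are `1 + N_A / D` and `1 + N_B / D` with `N_A - N_B = (a² - b²) sin² γ · s²`, so for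
`s ≠ 0` and `D ≠ 0` comparing `g_A` with `g_B` amounts to comparing radicands, i.e. to the sign of
`(a² - b²) sin² γ`. This needs the radicands to be nonnegative, which holds for all angles
because `D + N_A = (a s + b c)² + (1 - s²)(1 - b² c²)`. When `D = 0` both radicands equal `1`,
but then `|a b c s| = 1` forces `sin γ = 0`.
-/

open Real

lemma one_add_div_nonneg_of_add_nonneg {N D : ℝ} (hD : 0 ≤ D) (h : 0 ≤ D + N) :
    0 ≤ 1 + N / D := by
  rcases hD.eq_or_lt with rfl | hD
  · simp
  · rw [one_add_div hD.ne']
    positivity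

lemma ghzR_radicand_nonneg (α u s : ℝ) (hu : u ^ 2 ≤ 1) (hs : s ^ 2 ≤ 1) :
    0 ≤ 1 + sin α ^ 2 * (u ^ 2 - 1) * s ^ 2 / (1 + cos α * u * s) ^ 2 := by
  refine one_add_div_nonneg_of_add_nonneg (sq_nonneg _) ?_
  have key : (1 + cos α * u * s) ^ 2 + sin α ^ 2 * (u ^ 2 - 1) * s ^ 2 =
      (cos α * s + u) ^ 2 + (1 - s ^ 2) * (1 - u ^ 2) := by
    rw [sin_sq]
    ring
  rw [key]
  exact add_nonneg (sq_nonneg _) (mul_nonneg (by linarith) (by linarith))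

lemma sin_sq_mul_sub_sin_sq_mul (α β γ : ℝ) :
    sin α ^ 2 * (cos β ^ 2 * cos γ ^ 2 - 1) - sin β ^ 2 * (cos α ^ 2 * cos γ ^ 2 - 1) =
      (cos α ^ 2 - cos β ^ 2) * sin γ ^ 2 := by
  rw [sin_sq, sin_sq, sin_sq]
  ring

lemma sin_sq_eq_zero_of_one_add_cos_mul_cos_mul_cos_mul_eq_zero {α β γ s : ℝ} (hs : s ^ 2 ≤ 1)
    (h : 1 + cos α * cos β * cos γ * s = 0) : sin γ ^ 2 = 0 := by
  have hprod : (cos α ^ 2 * cos β ^ 2 * s ^ 2) * cos γ ^ 2 = 1 := by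
    linear_combination (cos α * cos β * cos γ * s - 1) * h
  have hab : cos α ^ 2 * cos β ^ 2 * s ^ 2 ≤ 1 :=
    mul_le_one₀ (mul_le_one₀ (cos_sq_le_one α) (sq_nonneg _) (cos_sq_le_one β)) (sq_nonneg _) hs
  nlinarith [sin_sq_add_cos_sq γ, cos_sq_le_one γ, sq_nonneg (cos γ)]

theorem ghzR_ggm_eigenvalue_comparison_general (α β γ δ : ℝ)
    (hδ : δ ∈ Set.Ioc 0 (Real.pi / 4)) :
    ((1 + Real.sqrt (1 + Real.sin α ^ 2 * (Real.cos β ^ 2 * Real.cos γ ^ 2 - 1) *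
          Real.sin (2 * δ) ^ 2 /
          (1 + Real.cos α * Real.cos β * Real.cos γ * Real.sin (2 * δ)) ^ 2)) / 2 ≥
      (1 + Real.sqrt (1 + Real.sin β ^ 2 * (Real.cos α ^ 2 * Real.cos γ ^ 2 - 1) *
          Real.sin (2 * δ) ^ 2 /
          (1 + Real.cos α * Real.cos β * Real.cos γ * Real.sin (2 * δ)) ^ 2)) / 2) ↔
    (Real.cos α ^ 2 - Real.cos β ^ 2) * Real.sin γ ^ 2 ≥ 0 := by
  set s := sin (2 * δ)
  have hs : s ^ 2 ≤ 1 := sin_sq_le_one _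
  have hs0 : s ≠ 0 := (sin_pos_of_pos_of_lt_pi (by linarith [hδ.1])
    (by linarith [hδ.2, pi_pos])).ne'
  have hA := ghzR_radicand_nonneg α (cos β * cos γ) s (by
    rw [mul_pow]; exact mul_le_one₀ (cos_sq_le_one β) (sq_nonneg _) (cos_sq_le_one γ)) hs
  rw [mul_pow, ← mul_assoc] at hA
  rw [ge_iff_le, div_le_div_iff_of_pos_right two_pos, add_le_add_iff_left,
    sqrt_le_sqrt_iff hA]
  rcases eq_or_ne (1 + cos α * cos β * cos γ * s) 0 with hD | hD
  · simp [hD, sin_sq_eq_zero_of_one_add_cos_mul_cos_mul_cos_mul_eq_zero hs hD]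
  · rw [← sub_nonneg, add_sub_add_left_eq_sub, ← sub_div, ← mul_sub_right_distrib,
      sin_sq_mul_sub_sin_sq_mul, mul_div_assoc]
    exact mul_nonneg_iff_of_pos_right (by positivity)

theorem ghzR_ggm_eigenvalue_comparison (α β γ δ : ℝ)
    (hα : α ∈ Set.Ioc 0 (Real.pi / 2)) (hβ : β ∈ Set.Ioc 0 (Real.pi / 2))
    (hγ : γ ∈ Set.Ioc 0 (Real.pi / 2)) (hδ : δ ∈ Set.Ioc 0 (Real.pi / 4)) :
    ((1 + Real.sqrt (1 + Real.sin α ^ 2 * (Real.cos β ^ 2 * Real.cos γ ^ 2 - 1) *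
          Real.sin (2 * δ) ^ 2 /
          (1 + Real.cos α * Real.cos β * Real.cos γ * Real.sin (2 * δ)) ^ 2)) / 2 ≥
      (1 + Real.sqrt (1 + Real.sin β ^ 2 * (Real.cos α ^ 2 * Real.cos γ ^ 2 - 1) *
          Real.sin (2 * δ) ^ 2 /
          (1 + Real.cos α * Real.cos β * Real.cos γ * Real.sin (2 * δ)) ^ 2)) / 2) ↔
    (Real.cos α ^ 2 - Real.cos β ^ 2) * Real.sin γ ^ 2 ≥ 0 :=
  ghzR_ggm_eigenvalue_comparison_general α β γ δ hδ
end

section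
/- Let α, β, γ ∈ (0, π/2], δ ∈ (0, π/4], X = cos α cos β cos γ sin(2δ). If (cos²α - cos²β)·sin²γ ≥ 0 and (cos²α - cos²γ)·sin²β ≥ 0, then M(ρ_BC) ≥ M(ρ_AC) and M(ρ_BC) ≥ M(ρ_AB), where M(ρ_BC) = 1 + ((cos²α - cos²β - cos²γ + 2cos²β cos²γ)sin²(2δ) - X²)/(1+X)², M(ρ_AC) = 1 + ((cos²β - cos²α - cos²γ + 2cos²α cos²γ)sin²(2δ) - X²)/(1+X)², M(ρ_AB) = 1 + ((cos²γ - cos²α - cos²β + 2cos²α cos²β)sin²(2δ) - X²)/(1+X)². -/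
/-! The three values `M` share the denominator `(1 + X)²` and the term `-X²`, so they are ordered
as their coefficients of `sin²(2δ)`. Those of `ρ_BC` and `ρ_AC` differ by
`2 (cos²α - cos²β) sin²γ`, those of `ρ_BC` and `ρ_AB` by `2 (cos²α - cos²γ) sin²β`. -/

theorem sub_sub_add_two_mul_le_iff (a b c : ℝ) :
    b - a - c + 2 * a * c ≤ a - b - c + 2 * b * c ↔ 0 ≤ (a - b) * (1 - c) := by
  have hdiff : (a - b - c + 2 * b * c) - (b - a - c + 2 * a * c) = 2 * ((a - b) * (1 - c)) := by
    ring
  rw [← sub_nonneg, hdiff]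
  exact mul_nonneg_iff_of_pos_left two_pos

theorem ghzR_lemma1_bell_ordering_general (α β γ δ : ℝ)
    (h1 : (Real.cos α ^ 2 - Real.cos β ^ 2) * Real.sin γ ^ 2 ≥ 0)
    (h2 : (Real.cos α ^ 2 - Real.cos γ ^ 2) * Real.sin β ^ 2 ≥ 0) :
    (1 + ((Real.cos α ^ 2 - Real.cos β ^ 2 - Real.cos γ ^ 2 +
          2 * Real.cos β ^ 2 * Real.cos γ ^ 2) * Real.sin (2 * δ) ^ 2 -
        (Real.cos α * Real.cos β * Real.cos γ * Real.sin (2 * δ)) ^ 2) /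
        (1 + Real.cos α * Real.cos β * Real.cos γ * Real.sin (2 * δ)) ^ 2 ≥
      1 + ((Real.cos β ^ 2 - Real.cos α ^ 2 - Real.cos γ ^ 2 +
          2 * Real.cos α ^ 2 * Real.cos γ ^ 2) * Real.sin (2 * δ) ^ 2 -
        (Real.cos α * Real.cos β * Real.cos γ * Real.sin (2 * δ)) ^ 2) /
        (1 + Real.cos α * Real.cos β * Real.cos γ * Real.sin (2 * δ)) ^ 2) ∧
    (1 + ((Real.cos α ^ 2 - Real.cos β ^ 2 - Real.cos γ ^ 2 +
          2 * Real.cos β ^ 2 * Real.cos γ ^ 2) * Real.sin (2 * δ) ^ 2 -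
        (Real.cos α * Real.cos β * Real.cos γ * Real.sin (2 * δ)) ^ 2) /
        (1 + Real.cos α * Real.cos β * Real.cos γ * Real.sin (2 * δ)) ^ 2 ≥
      1 + ((Real.cos γ ^ 2 - Real.cos α ^ 2 - Real.cos β ^ 2 +
          2 * Real.cos α ^ 2 * Real.cos β ^ 2) * Real.sin (2 * δ) ^ 2 -
        (Real.cos α * Real.cos β * Real.cos γ * Real.sin (2 * δ)) ^ 2) /
        (1 + Real.cos α * Real.cos β * Real.cos γ * Real.sin (2 * δ)) ^ 2) := by
  rw [Real.sin_sq] at h1 h2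
  constructor
  · gcongr 1 + (?_ * _ - _) / _
    exact (sub_sub_add_two_mul_le_iff _ _ _).mpr h1
  · gcongr 1 + (?_ * _ - _) / _
    have := (sub_sub_add_two_mul_le_iff (Real.cos α ^ 2) (Real.cos γ ^ 2) (Real.cos β ^ 2)).mpr h2
    linarith

theorem ghzR_lemma1_bell_ordering (α β γ δ : ℝ)
    (hα : α ∈ Set.Ioc 0 (Real.pi / 2)) (hβ : β ∈ Set.Ioc 0 (Real.pi / 2))
    (hγ : γ ∈ Set.Ioc 0 (Real.pi / 2)) (hδ : δ ∈ Set.Ioc 0 (Real.pi / 4))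
    (h1 : (Real.cos α ^ 2 - Real.cos β ^ 2) * Real.sin γ ^ 2 ≥ 0)
    (h2 : (Real.cos α ^ 2 - Real.cos γ ^ 2) * Real.sin β ^ 2 ≥ 0) :
    (1 + ((Real.cos α ^ 2 - Real.cos β ^ 2 - Real.cos γ ^ 2 +
          2 * Real.cos β ^ 2 * Real.cos γ ^ 2) * Real.sin (2 * δ) ^ 2 -
        (Real.cos α * Real.cos β * Real.cos γ * Real.sin (2 * δ)) ^ 2) /
        (1 + Real.cos α * Real.cos β * Real.cos γ * Real.sin (2 * δ)) ^ 2 ≥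
      1 + ((Real.cos β ^ 2 - Real.cos α ^ 2 - Real.cos γ ^ 2 +
          2 * Real.cos α ^ 2 * Real.cos γ ^ 2) * Real.sin (2 * δ) ^ 2 -
        (Real.cos α * Real.cos β * Real.cos γ * Real.sin (2 * δ)) ^ 2) /
        (1 + Real.cos α * Real.cos β * Real.cos γ * Real.sin (2 * δ)) ^ 2) ∧
    (1 + ((Real.cos α ^ 2 - Real.cos β ^ 2 - Real.cos γ ^ 2 +
          2 * Real.cos β ^ 2 * Real.cos γ ^ 2) * Real.sin (2 * δ) ^ 2 -
        (Real.cos α * Real.cos β * Real.cos γ * Real.sin (2 * δ)) ^ 2) /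
        (1 + Real.cos α * Real.cos β * Real.cos γ * Real.sin (2 * δ)) ^ 2 ≥
      1 + ((Real.cos γ ^ 2 - Real.cos α ^ 2 - Real.cos β ^ 2 +
          2 * Real.cos α ^ 2 * Real.cos β ^ 2) * Real.sin (2 * δ) ^ 2 -
        (Real.cos α * Real.cos β * Real.cos γ * Real.sin (2 * δ)) ^ 2) /
        (1 + Real.cos α * Real.cos β * Real.cos γ * Real.sin (2 * δ)) ^ 2) :=
  ghzR_lemma1_bell_ordering_general α β γ δ h1 h2
end

section
/- Let a, b, c > 0 and d ≥ 0 with a + b + c + d = 1, and let V = [(√a+√b-√c)²+d]·[(√a-√b+√c)²+d]·[(-√a+√b+√c)²+d]·[(√a+√b+√c)²+d]. Then 1 - 4(a+b)c ≥ 1/2 + (12ab - 4ac - 4bc + √V)/2 - 1, i.e., 3/2 - (4ac + 4bc + 12ab + √V)/2 ≥ 0. -/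
/-!
With x, y, z = √a, √b, √c put s = x² + y², w = z² and u = 4x²y² ≤ s²; then s + w + d = 1.
Substituting d = 1 - s - w turns each factor of V into 1 ± 2xy ± 2xz ± 2yz; pairing them gives
V = (1 + u - 4ws)² - (4xy(1 - 2w))², and then
(3 - 3u - 4ws)² - V = 8[(1 - u)(1 - u - 2ws) - 2wdu].
The bracket is nonnegative: in u both factors decrease while 2wdu increases, and at the extreme
u = s² it reduces to (1 + s)² ≥ 2s², true for s ≤ 1.
-/

open Real

lemma two_mul_mul_mul_le_of_le_sq {s w e u : ℝ} (hs : 0 ≤ s) (hw : 0 ≤ w) (he : 0 ≤ e)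
    (hsum : s + w + e = 1) (hu : u ≤ s ^ 2) :
    2 * w * e * u ≤ (1 - u) * (1 - u - 2 * w * s) := by
  have hs1 : s ≤ 1 := by linarith
  have h_one_sub_sq : 1 - s ^ 2 = (w + e) * (1 + s) := by linear_combination (-(1 + s)) * hsum
  have h_one_sub_sq_sub : 1 - s ^ 2 - 2 * w * s = w * (w + e) + e * (1 + s) := by
    linear_combination (-(1 + s + w)) * hsum
  have h_factor_nonneg : 0 ≤ 1 - s ^ 2 - 2 * w * s := by rw [h_one_sub_sq_sub]; positivity
  calc 2 * w * e * u ≤ 2 * w * e * s ^ 2 := by gcongr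
    _ ≤ w * e * (1 + s) ^ 2 := by
      have : 0 ≤ w * e * (1 + 2 * s - s ^ 2) := mul_nonneg (mul_nonneg hw he) (by nlinarith)
      linear_combination this
    _ ≤ (1 - s ^ 2) * (1 - s ^ 2 - 2 * w * s) := by
      rw [h_one_sub_sq_sub, h_one_sub_sq]
      have : 0 ≤ w * (w + e) ^ 2 * (1 + s) + e ^ 2 * (1 + s) ^ 2 := by positivity
      linear_combination this
    _ ≤ (1 - u) * (1 - u - 2 * w * s) := by
      gcongr
      nlinarith

section
variable {x y z d : ℝ}

lemma four_factor_product_eq (h : x ^ 2 + y ^ 2 + z ^ 2 + d = 1) :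
    ((x + y - z) ^ 2 + d) * (((x - y + z) ^ 2 + d) *
      (((-x + y + z) ^ 2 + d) * ((x + y + z) ^ 2 + d))) =
      (1 + 4 * (x * y) ^ 2 - 4 * z ^ 2 * (x ^ 2 + y ^ 2)) ^ 2 -
        (4 * (x * y) * (1 - 2 * z ^ 2)) ^ 2 := by
  obtain rfl : d = 1 - x ^ 2 - y ^ 2 - z ^ 2 := by linear_combination h
  ring

lemma four_factor_product_le (hd : 0 ≤ d) (h : x ^ 2 + y ^ 2 + z ^ 2 + d = 1) :
    ((x + y - z) ^ 2 + d) * (((x - y + z) ^ 2 + d) *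
      (((-x + y + z) ^ 2 + d) * ((x + y + z) ^ 2 + d))) ≤
      (3 - 4 * (x ^ 2 + y ^ 2) * z ^ 2 - 12 * x ^ 2 * y ^ 2) ^ 2 := by
  have hu : 4 * (x * y) ^ 2 ≤ (x ^ 2 + y ^ 2) ^ 2 := by nlinarith [sq_nonneg (x ^ 2 - y ^ 2)]
  have key :=
    two_mul_mul_mul_le_of_le_sq (by positivity) (sq_nonneg z) hd (by linear_combination h) hu
  rw [four_factor_product_eq h]
  obtain rfl : d = 1 - x ^ 2 - y ^ 2 - z ^ 2 := by linear_combination h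
  linear_combination 8 * key

lemma sqrt_four_factor_product_le (hd : 0 ≤ d) (h : x ^ 2 + y ^ 2 + z ^ 2 + d = 1) :
    √(((x + y - z) ^ 2 + d) * (((x - y + z) ^ 2 + d) *
      (((-x + y + z) ^ 2 + d) * ((x + y + z) ^ 2 + d)))) ≤
      3 - 4 * (x ^ 2 + y ^ 2) * z ^ 2 - 12 * x ^ 2 * y ^ 2 := by
  refine sqrt_le_iff.mpr ⟨?_, four_factor_product_le hd h⟩
  nlinarith [sq_nonneg (x ^ 2 - y ^ 2), sq_nonneg z, sq_nonneg x, sq_nonneg y]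

end

theorem wclass_ggm_theorem2_inequality (a b c d : ℝ)
    (ha : 0 < a) (hb : 0 < b) (hc : 0 < c) (hd : 0 ≤ d)
    (hsum : a + b + c + d = 1) :
    1 - 4 * (a + b) * c ≥
      1 / 2 + (12 * a * b - 4 * a * c - 4 * b * c +
        Real.sqrt (((Real.sqrt a + Real.sqrt b - Real.sqrt c) ^ 2 + d) *
          (((Real.sqrt a - Real.sqrt b + Real.sqrt c) ^ 2 + d) *
          (((-Real.sqrt a + Real.sqrt b + Real.sqrt c) ^ 2 + d) *
          ((Real.sqrt a + Real.sqrt b + Real.sqrt c) ^ 2 + d))))) / 2 - 1 ∧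
    3 / 2 - (4 * a * c + 4 * b * c + 12 * a * b +
        Real.sqrt (((Real.sqrt a + Real.sqrt b - Real.sqrt c) ^ 2 + d) *
          (((Real.sqrt a - Real.sqrt b + Real.sqrt c) ^ 2 + d) *
          (((-Real.sqrt a + Real.sqrt b + Real.sqrt c) ^ 2 + d) *
          ((Real.sqrt a + Real.sqrt b + Real.sqrt c) ^ 2 + d))))) / 2 ≥ 0 := by
  have key := sqrt_four_factor_product_le (x := √a) (y := √b) (z := √c) hd
    (by rw [sq_sqrt ha.le, sq_sqrt hb.le, sq_sqrt hc.le]; exact hsum)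
  rw [sq_sqrt ha.le, sq_sqrt hb.le, sq_sqrt hc.le] at key
  constructor <;> linarith
end

section
/- Let a, b, c > 0 and d ≥ 0 with a + b + c + d = 1, and V as above. If b ≥ c and a ≥ c, then the eigenvalue ordering λ₂ ≤ λ₁ ≤ λ₃ holds, where λ₁ = 4ab, λ₂ = 1/2 + 2(ab - ac - bc) - √V/2, λ₃ = 1/2 + 2(ab - ac - bc) + √V/2, hence M(ρ_BC) = λ₁ + λ₃ = 1/2 + (12ab - 4ac - 4bc + √V)/2. -/
/-!
The four factors of `V` multiply out to `((a + b + c + d)² - 4(ab + ac + bc))² + 64abcd`,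
a Heron-type identity in `√a, √b, √c` shifted by `d`. With `a + b + c + d = 1` this gives
`|1 - 4(ab + ac + bc)| ≤ √V`, and `λ₂ ≤ λ₁ ≤ λ₃` are exactly the two halves of that bound.
-/

open Real

theorem sq_add_mul_sq_add_mul_sq_add_mul_sq_add (x y z d : ℝ) :
    ((x + y - z) ^ 2 + d) * (((x - y + z) ^ 2 + d) *
      (((-x + y + z) ^ 2 + d) * ((x + y + z) ^ 2 + d))) =
      ((x ^ 2 + y ^ 2 + z ^ 2 + d) ^ 2 -
          4 * (x ^ 2 * y ^ 2 + x ^ 2 * z ^ 2 + y ^ 2 * z ^ 2)) ^ 2 +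
        64 * (x ^ 2 * y ^ 2 * z ^ 2 * d) := by
  ring

theorem abs_sq_sub_le_sqrt_prod_sq_add {a b c d : ℝ}
    (ha : 0 ≤ a) (hb : 0 ≤ b) (hc : 0 ≤ c) (hd : 0 ≤ d) :
    |(a + b + c + d) ^ 2 - 4 * (a * b + a * c + b * c)| ≤
      √(((√a + √b - √c) ^ 2 + d) * (((√a - √b + √c) ^ 2 + d) *
        (((-√a + √b + √c) ^ 2 + d) * ((√a + √b + √c) ^ 2 + d)))) := by
  apply abs_le_sqrt
  rw [sq_add_mul_sq_add_mul_sq_add_mul_sq_add, sq_sqrt ha, sq_sqrt hb, sq_sqrt hc]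
  have habcd : 0 ≤ a * b * c * d := by positivity
  linarith

theorem wclass_eigenvalue_ordering_general (a b c d : ℝ)
    (ha : 0 < a) (hb : 0 < b) (hc : 0 < c) (hd : 0 ≤ d)
    (hsum : a + b + c + d = 1) :
    (1 / 2 + 2 * (a * b - a * c - b * c) -
        Real.sqrt (((Real.sqrt a + Real.sqrt b - Real.sqrt c) ^ 2 + d) *
          (((Real.sqrt a - Real.sqrt b + Real.sqrt c) ^ 2 + d) *
          (((-Real.sqrt a + Real.sqrt b + Real.sqrt c) ^ 2 + d) *
          ((Real.sqrt a + Real.sqrt b + Real.sqrt c) ^ 2 + d)))) / 2 ≤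
      4 * a * b) ∧
    (4 * a * b ≤
      1 / 2 + 2 * (a * b - a * c - b * c) +
        Real.sqrt (((Real.sqrt a + Real.sqrt b - Real.sqrt c) ^ 2 + d) *
          (((Real.sqrt a - Real.sqrt b + Real.sqrt c) ^ 2 + d) *
          (((-Real.sqrt a + Real.sqrt b + Real.sqrt c) ^ 2 + d) *
          ((Real.sqrt a + Real.sqrt b + Real.sqrt c) ^ 2 + d)))) / 2) ∧
    (4 * a * b +
      (1 / 2 + 2 * (a * b - a * c - b * c) +
        Real.sqrt (((Real.sqrt a + Real.sqrt b - Real.sqrt c) ^ 2 + d) *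
          (((Real.sqrt a - Real.sqrt b + Real.sqrt c) ^ 2 + d) *
          (((-Real.sqrt a + Real.sqrt b + Real.sqrt c) ^ 2 + d) *
          ((Real.sqrt a + Real.sqrt b + Real.sqrt c) ^ 2 + d)))) / 2) =
      1 / 2 + (12 * a * b - 4 * a * c - 4 * b * c +
        Real.sqrt (((Real.sqrt a + Real.sqrt b - Real.sqrt c) ^ 2 + d) *
          (((Real.sqrt a - Real.sqrt b + Real.sqrt c) ^ 2 + d) *
          (((-Real.sqrt a + Real.sqrt b + Real.sqrt c) ^ 2 + d) *
          ((Real.sqrt a + Real.sqrt b + Real.sqrt c) ^ 2 + d))))) / 2) := by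
  have hbound := abs_sq_sub_le_sqrt_prod_sq_add ha.le hb.le hc.le hd
  rw [hsum, one_pow] at hbound
  obtain ⟨h₂₁, h₁₃⟩ := abs_le.mp hbound
  exact ⟨by linarith, by linarith, by ring⟩

theorem wclass_eigenvalue_ordering (a b c d : ℝ)
    (ha : 0 < a) (hb : 0 < b) (hc : 0 < c) (hd : 0 ≤ d)
    (hsum : a + b + c + d = 1) (hbc : b ≥ c) (hac : a ≥ c) :
    (1 / 2 + 2 * (a * b - a * c - b * c) -
        Real.sqrt (((Real.sqrt a + Real.sqrt b - Real.sqrt c) ^ 2 + d) *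
          (((Real.sqrt a - Real.sqrt b + Real.sqrt c) ^ 2 + d) *
          (((-Real.sqrt a + Real.sqrt b + Real.sqrt c) ^ 2 + d) *
          ((Real.sqrt a + Real.sqrt b + Real.sqrt c) ^ 2 + d)))) / 2 ≤
      4 * a * b) ∧
    (4 * a * b ≤
      1 / 2 + 2 * (a * b - a * c - b * c) +
        Real.sqrt (((Real.sqrt a + Real.sqrt b - Real.sqrt c) ^ 2 + d) *
          (((Real.sqrt a - Real.sqrt b + Real.sqrt c) ^ 2 + d) *
          (((-Real.sqrt a + Real.sqrt b + Real.sqrt c) ^ 2 + d) *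
          ((Real.sqrt a + Real.sqrt b + Real.sqrt c) ^ 2 + d)))) / 2) ∧
    (4 * a * b +
      (1 / 2 + 2 * (a * b - a * c - b * c) +
        Real.sqrt (((Real.sqrt a + Real.sqrt b - Real.sqrt c) ^ 2 + d) *
          (((Real.sqrt a - Real.sqrt b + Real.sqrt c) ^ 2 + d) *
          (((-Real.sqrt a + Real.sqrt b + Real.sqrt c) ^ 2 + d) *
          ((Real.sqrt a + Real.sqrt b + Real.sqrt c) ^ 2 + d)))) / 2) =
      1 / 2 + (12 * a * b - 4 * a * c - 4 * b * c +
        Real.sqrt (((Real.sqrt a + Real.sqrt b - Real.sqrt c) ^ 2 + d) *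
          (((Real.sqrt a - Real.sqrt b + Real.sqrt c) ^ 2 + d) *
          (((-Real.sqrt a + Real.sqrt b + Real.sqrt c) ^ 2 + d) *
          ((Real.sqrt a + Real.sqrt b + Real.sqrt c) ^ 2 + d))))) / 2) :=
  wclass_eigenvalue_ordering_general a b c d ha hb hc hd hsum
end

section
/- Let a, b, c > 0, d ≥ 0 with a+b+c+d = 1 and b ≥ c, a ≥ c (so that the GGM of ψ_W comes from the A:BC split). Then the complementarity relation 4G(1-G) + B ≤ 1 holds, where G = (1 - √(1 - 4(a+b)c))/2 and B = max{0, (12ab - 4ac - 4bc + √V - 1)/2} with V = [(√a+√b-√c)²+d]·[(√a-√b+√c)²+d]·[(-√a+√b+√c)²+d]·[(√a+√b+√c)²+d]. -/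
/-!
With `d = 1 - a - b - c` the radicand `V` collapses to `(1 + 4ab - 4(a+b)c)² - 16ab(1 - 2c)²`,
while `4G(1 - G) = 4(a+b)c`. The claim thus reduces to `√V ≤ 3 - 12ab - 4(a+b)c`, and
`(3 - 12ab - 4(a+b)c)² - V = 4[(1 - 8ab)(2 - 4ab - 4(a+b)c) + 4ab(1 - 2c)²]`, a polynomial that is
nonnegative on the simplex `a, b, c ≥ 0, a + b + c ≤ 1` (it vanishes at `a = b = 1/2`).
-/

open Real

lemma four_mul_half_one_sub_sqrt_mul {t : ℝ} (ht : t ≤ 1) :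
    4 * ((1 - √(1 - t)) / 2) * (1 - (1 - √(1 - t)) / 2) = t := by
  linear_combination -Real.sq_sqrt (sub_nonneg.2 ht)

section Simplex

variable {a b c : ℝ}

lemma four_mul_add_mul_le_one
    (ha : 0 ≤ a) (hb : 0 ≤ b) (hc : 0 ≤ c) (habc : a + b + c ≤ 1) :
    4 * (a + b) * c ≤ 1 := by
  nlinarith [sq_nonneg (a + b - c)]

lemma three_sub_twelve_mul_sub_four_mul_nonneg
    (ha : 0 ≤ a) (hb : 0 ≤ b) (hc : 0 ≤ c) (habc : a + b + c ≤ 1) :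
    0 ≤ 3 - 12 * a * b - 4 * (a + b) * c := by
  nlinarith [sq_nonneg (a - b),
    mul_nonneg (sub_nonneg.2 habc) (by linarith : (0:ℝ) ≤ 3 - (a + b)),
    mul_nonneg hc (add_nonneg ha hb)]

lemma bell_gap_nonneg (ha : 0 ≤ a) (hb : 0 ≤ b) (hc : 0 ≤ c) (habc : a + b + c ≤ 1) :
    0 ≤ (1 - 8 * a * b) * (2 - 4 * a * b - 4 * (a + b) * c) + 4 * a * b * (1 - 2 * c) ^ 2 := by
  have hd : 0 ≤ 1 - a - b - c := by linarith
  have hpos : 0 ≤ 1 - 4 * a * b + 1 - (a + b) ^ 2 - 2 * c * (a + b) := by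
    nlinarith [sq_nonneg (a - b), sq_nonneg (a + b + c - 1), mul_nonneg ha hb,
      mul_nonneg hc (sub_nonneg.2 habc)]
  nlinarith [mul_nonneg (sq_nonneg (a - b)) hpos,
    mul_nonneg (mul_nonneg hc hd) (sq_nonneg (a - b)),
    mul_nonneg (mul_nonneg hc hd) (sq_nonneg (a + b)),
    mul_nonneg (mul_nonneg hc hd) (mul_nonneg (add_nonneg ha hb) (sub_nonneg.2 habc)),
    mul_nonneg hc (sq_nonneg (1 - (a + b) ^ 2 - c * (a + b))),
    sq_nonneg (1 - (a + b) ^ 2 - c * (a + b)),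
    mul_nonneg (mul_nonneg hc hc) (sq_nonneg (a + b)),
    mul_nonneg (mul_nonneg hd hd) (sq_nonneg (a + b))]

lemma sqrt_bell_radicand_le
    (ha : 0 ≤ a) (hb : 0 ≤ b) (hc : 0 ≤ c) (habc : a + b + c ≤ 1) :
    √((1 + 4 * a * b - 4 * (a + b) * c) ^ 2 - 16 * a * b * (1 - 2 * c) ^ 2) ≤
      3 - 12 * a * b - 4 * (a + b) * c := by
  rw [Real.sqrt_le_iff]
  refine ⟨three_sub_twelve_mul_sub_four_mul_nonneg ha hb hc habc, ?_⟩
  linear_combination 4 * bell_gap_nonneg ha hb hc habc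

lemma bell_violation_le (ha : 0 ≤ a) (hb : 0 ≤ b) (hc : 0 ≤ c) (habc : a + b + c ≤ 1) :
    max 0 ((12 * a * b - 4 * a * c - 4 * b * c +
      √((1 + 4 * a * b - 4 * (a + b) * c) ^ 2 - 16 * a * b * (1 - 2 * c) ^ 2) - 1) / 2) ≤
      1 - 4 * (a + b) * c := by
  refine max_le (sub_nonneg.2 (four_mul_add_mul_le_one ha hb hc habc)) ?_
  linarith [sqrt_bell_radicand_le ha hb hc habc]

end Simplex

lemma wclass_bell_radicand_eq {a b c d : ℝ} (ha : 0 ≤ a) (hb : 0 ≤ b) (hc : 0 ≤ c)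
    (hsum : a + b + c + d = 1) :
    ((√a + √b - √c) ^ 2 + d) * (((√a - √b + √c) ^ 2 + d) *
      (((-√a + √b + √c) ^ 2 + d) * ((√a + √b + √c) ^ 2 + d))) =
      (1 + 4 * a * b - 4 * (a + b) * c) ^ 2 - 16 * a * b * (1 - 2 * c) ^ 2 := by
  obtain rfl : d = 1 - a - b - c := by linarith
  rw [← Real.sq_sqrt ha, ← Real.sq_sqrt hb, ← Real.sq_sqrt hc]
  simp only [Real.sqrt_sq (Real.sqrt_nonneg _)]
  ring

theorem wclass_ggm_bell_complementarity_general (a b c d : ℝ)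
    (ha : 0 < a) (hb : 0 < b) (hc : 0 < c) (hd : 0 ≤ d)
    (hsum : a + b + c + d = 1) :
    4 * ((1 - Real.sqrt (1 - 4 * (a + b) * c)) / 2) *
        (1 - (1 - Real.sqrt (1 - 4 * (a + b) * c)) / 2) +
      max 0 ((12 * a * b - 4 * a * c - 4 * b * c +
        Real.sqrt (((Real.sqrt a + Real.sqrt b - Real.sqrt c) ^ 2 + d) *
          (((Real.sqrt a - Real.sqrt b + Real.sqrt c) ^ 2 + d) *
          (((-Real.sqrt a + Real.sqrt b + Real.sqrt c) ^ 2 + d) *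
          ((Real.sqrt a + Real.sqrt b + Real.sqrt c) ^ 2 + d)))) - 1) / 2) ≤ 1 := by
  have habc : a + b + c ≤ 1 := by linarith
  rw [four_mul_half_one_sub_sqrt_mul (four_mul_add_mul_le_one ha.le hb.le hc.le habc),
    wclass_bell_radicand_eq ha.le hb.le hc.le hsum]
  linarith [bell_violation_le ha.le hb.le hc.le habc]

theorem wclass_ggm_bell_complementarity (a b c d : ℝ)
    (ha : 0 < a) (hb : 0 < b) (hc : 0 < c) (hd : 0 ≤ d)
    (hsum : a + b + c + d = 1) (hbc : b ≥ c) (hac : a ≥ c) :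
    4 * ((1 - Real.sqrt (1 - 4 * (a + b) * c)) / 2) *
        (1 - (1 - Real.sqrt (1 - 4 * (a + b) * c)) / 2) +
      max 0 ((12 * a * b - 4 * a * c - 4 * b * c +
        Real.sqrt (((Real.sqrt a + Real.sqrt b - Real.sqrt c) ^ 2 + d) *
          (((Real.sqrt a - Real.sqrt b + Real.sqrt c) ^ 2 + d) *
          (((-Real.sqrt a + Real.sqrt b + Real.sqrt c) ^ 2 + d) *
          ((Real.sqrt a + Real.sqrt b + Real.sqrt c) ^ 2 + d)))) - 1) / 2) ≤ 1 :=
  wclass_ggm_bell_complementarity_general a b c d ha hb hc hd hsum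
end
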